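/- (Two-dimensional enstrophy constants of motion.) Let u, ρ, p be smooth on ℝ × ℝ² with ρ > 0, satisfying ∂ₜu + (u·∇)u = −(1/ρ)∇p, ∂ₜρ + div(ρu) = 0, and p(t,x) = P(ρ(t,x)) for some continuously differentiable P : ℝ → ℝ. Let φ : ℝ × ℝ² → ℝ² be a continuously differentiable flow of u (φ(0,x) = x, ∂ₜφ(t,x) = u(t,φ(t,x)), with ∂ₜD_xφ = D_xu(t,φ)∘D_xφ) such that φ(t,·) is injective for each t. Let ϖ = ∂₁u² − ∂₂u¹ be the scalar vorticity, let f : ℝ → ℝ be continuous, and let V₀ ⊆ ℝ² be a bounded measurable set. Then the generalized enstrophy t ↦ ∫_{φ(t,·)''V₀} f(ϖ(t,x)/ρ(t,x)) ρ(t,x) dx is constant, equal to ∫_{V₀} f(ϖ(0,x)/ρ(0,x)) ρ(0,x) dx. -/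

import Mathlib

open scoped RealInnerProductSpace

/-- The scalar vorticity `ϖ = ∂₁u² − ∂₂u¹` of a time-dependent planar velocity field. -/
noncomputable def vortScalar2
    (u : ℝ × EuclideanSpace ℝ (Fin 2) → EuclideanSpace ℝ (Fin 2))
    (t : ℝ) (x : EuclideanSpace ℝ (Fin 2)) : ℝ :=
  fderiv ℝ (fun y => u (t, y)) x (EuclideanSpace.single 0 1) 1
    - fderiv ℝ (fun y => u (t, y)) x (EuclideanSpace.single 1 1) 0

private abbrev E2 := EuclideanSpace ℝ (Fin 2)

namespace Enstrophy2D

noncomputable def ee (i : Fin 2) : E2 := EuclideanSpace.single i 1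

/-- spatial slice has derivative: full fderiv composed with inr. -/
lemma hasFDerivAt_slice {G : Type*} [NormedAddCommGroup G] [NormedSpace ℝ G]
    {F : ℝ × E2 → G} {t : ℝ} {x : E2} (hF : DifferentiableAt ℝ F (t, x)) :
    HasFDerivAt (fun y => F (t, y)) ((fderiv ℝ F (t, x)).comp
      (ContinuousLinearMap.inr ℝ ℝ E2)) x := by
  have h1 : HasFDerivAt (fun y : E2 => ((t, y) : ℝ × E2))
      (ContinuousLinearMap.inr ℝ ℝ E2) x := hasFDerivAt_prodMk_right t x
  exact hF.hasFDerivAt.comp x h1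

lemma fderiv_slice_apply {G : Type*} [NormedAddCommGroup G] [NormedSpace ℝ G]
    {F : ℝ × E2 → G} {t : ℝ} {x : E2} (hF : DifferentiableAt ℝ F (t, x)) (w : E2) :
    fderiv ℝ (fun y => F (t, y)) x w = fderiv ℝ F (t, x) (0, w) := by
  rw [(hasFDerivAt_slice hF).fderiv]; rfl

/-- time slice derivative. -/
lemma hasDerivAt_slice {G : Type*} [NormedAddCommGroup G] [NormedSpace ℝ G]
    {F : ℝ × E2 → G} {t : ℝ} {x : E2} (hF : DifferentiableAt ℝ F (t, x)) :
    HasDerivAt (fun τ => F (τ, x)) (fderiv ℝ F (t, x) (1, 0)) t := by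
  have h1 : HasDerivAt (fun τ : ℝ => ((τ, x) : ℝ × E2)) (1, 0) t :=
    (hasDerivAt_id t).prodMk (hasDerivAt_const t x)
  exact hF.hasFDerivAt.comp_hasDerivAt t h1

/-- chain rule along a moving point. -/
lemma hasDerivAt_along {G : Type*} [NormedAddCommGroup G] [NormedSpace ℝ G]
    {F : ℝ × E2 → G} {X : ℝ → E2} {t : ℝ} {v : E2}
    (hF : DifferentiableAt ℝ F (t, X t)) (hX : HasDerivAt X v t) :
    HasDerivAt (fun τ => F (τ, X τ)) (fderiv ℝ F (t, X t) (1, v)) t := by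
  have h1 : HasDerivAt (fun τ : ℝ => ((τ, X τ) : ℝ × E2)) (1, v) t :=
    (hasDerivAt_id t).prodMk hX
  exact hF.hasFDerivAt.comp_hasDerivAt t h1

/-- Schwarz: symmetry of directional second derivatives for C² functions. -/
lemma schwarz {G : Type*} [NormedAddCommGroup G] [NormedSpace ℝ G]
    {F : ℝ × E2 → G} (hF : ContDiff ℝ (⊤ : ℕ∞) F) (q v w : ℝ × E2) :
    fderiv ℝ (fun q' => fderiv ℝ F q' v) q w
      = fderiv ℝ (fun q' => fderiv ℝ F q' w) q v := by
  have hd : Differentiable ℝ F := (hF.of_le (by simp) : ContDiff ℝ 1 F).differentiable one_ne_zero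
  have hf' : ContDiff ℝ 1 (fderiv ℝ F) := by
    exact (hF.of_le (WithTop.coe_le_coe.mpr le_top) : ContDiff ℝ 2 F).fderiv_right (by norm_num)
  have hx : HasFDerivAt (fderiv ℝ F) (fderiv ℝ (fderiv ℝ F) q) q :=
    ((hf'.differentiable one_ne_zero) q).hasFDerivAt
  have hsymm := second_derivative_symmetric (fun y => (hd y).hasFDerivAt) hx v w
  have h1 : ∀ z : ℝ × E2, fderiv ℝ (fun q' => fderiv ℝ F q' z) q
      = (fderiv ℝ (fderiv ℝ F) q).flip z := by
    intro z
    have := fderiv_clm_apply (c := fderiv ℝ F) (u := fun _ => z)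
      ((hf'.differentiable one_ne_zero) q) (differentiableAt_const z)
    simpa [fderiv_const] using this
  rw [h1 v, h1 w]
  simp only [ContinuousLinearMap.flip_apply]
  exact (second_derivative_symmetric (fun y => (hd y).hasFDerivAt) hx w v).symm ▸ hsymm.symm


lemma decomp (v : E2) : v = v 0 • ee 0 + v 1 • ee 1 := by
  ext i
  fin_cases i <;> simp [ee, EuclideanSpace.single_apply]

lemma det_fin_two_clm (M : E2 →L[ℝ] E2) :
    M.det = M (ee 0) 0 * M (ee 1) 1 - M (ee 0) 1 * M (ee 1) 0 := by
  have b := (EuclideanSpace.basisFun (Fin 2) ℝ).toBasis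
  rw [ContinuousLinearMap.det, ← LinearMap.det_toMatrix
    (EuclideanSpace.basisFun (Fin 2) ℝ).toBasis, Matrix.det_fin_two]
  simp [LinearMap.toMatrix_apply, ee, EuclideanSpace.basisFun_apply]
  ring

lemma inner_single (v : E2) (i : Fin 2) : ⟪v, ee i⟫ = v i := by
  simp [ee, EuclideanSpace.inner_single_right]

lemma gradient_component {g : E2 → ℝ} {x : E2} (i : Fin 2) :
    gradient g x i = fderiv ℝ g x (ee i) := by
  rw [← inner_single (gradient g x) i, gradient, InnerProductSpace.toDual_symm_apply]


noncomputable def what (i : Fin 2) : ℝ × E2 := (0, ee i)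
noncomputable def that : ℝ × E2 := ((1 : ℝ), (0 : E2))

variable {u : ℝ × E2 → E2} {ρ p : ℝ × E2 → ℝ}

noncomputable def uc (u : ℝ × E2 → E2) (i : Fin 2) : ℝ × E2 → ℝ := fun q => u q i

lemma contDiff_uc (hu : ContDiff ℝ (⊤ : ℕ∞) u) (i : Fin 2) : ContDiff ℝ (⊤ : ℕ∞) (uc u i) :=
  (EuclideanSpace.proj (𝕜 := ℝ) i).contDiff.comp hu

lemma contDiff_D {G : Type*} [NormedAddCommGroup G] [NormedSpace ℝ G]
    {g : ℝ × E2 → G} (hg : ContDiff ℝ (⊤ : ℕ∞) g) (w : ℝ × E2) :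
    ContDiff ℝ (⊤ : ℕ∞) (fun q => fderiv ℝ g q w) :=
  (hg.fderiv_right (by simp)).clm_apply contDiff_const

lemma diff_D {G : Type*} [NormedAddCommGroup G] [NormedSpace ℝ G]
    {g : ℝ × E2 → G} (hg : ContDiff ℝ (⊤ : ℕ∞) g) (w : ℝ × E2) :
    Differentiable ℝ (fun q => fderiv ℝ g q w) :=
  (contDiff_D hg w).differentiable (by simp)

/-- component of a full fderiv of a vector field is the full fderiv of the component. -/
lemma fderiv_proj (hu : ContDiff ℝ (⊤ : ℕ∞) u) (q : ℝ × E2) (v : ℝ × E2) (i : Fin 2) :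
    fderiv ℝ u q v i = fderiv ℝ (uc u i) q v := by
  have h := ((EuclideanSpace.proj (𝕜 := ℝ) i).hasFDerivAt.comp q
      ((hu.differentiable (by simp)) q).hasFDerivAt).fderiv
  have : fderiv ℝ (uc u i) q = (EuclideanSpace.proj (𝕜 := ℝ) i).comp (fderiv ℝ u q) := h
  rw [this]; rfl


/-- decompose full derivative along (1, v). -/
lemma fderiv_one_v {G : Type*} [NormedAddCommGroup G] [NormedSpace ℝ G]
    (L : ℝ × E2 →L[ℝ] G) (v : E2) :
    L (1, v) = L that + v 0 • L (what 0) + v 1 • L (what 1) := by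
  have h1 : ((1 : ℝ), v) = that + v 0 • what 0 + v 1 • what 1 := by
    simp only [that, what, Prod.smul_mk, Prod.mk_add_mk, smul_zero]
    refine Prod.ext (by simp) ?_
    simp only [zero_add]
    exact decomp v
  rw [h1, map_add, map_add, map_smul, map_smul]

/-- component form of the Euler equation, in terms of full-space derivatives. -/
lemma eulerC (hu : ContDiff ℝ (⊤ : ℕ∞) u) (hρ : ContDiff ℝ (⊤ : ℕ∞) ρ) (hp : ContDiff ℝ (⊤ : ℕ∞) p)
    (euler : ∀ (t : ℝ) (x : E2),
      deriv (fun τ => u (τ, x)) t + fderiv ℝ (fun y => u (t, y)) x (u (t, x))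
        = -(1 / ρ (t, x)) • gradient (fun y => p (t, y)) x)
    (i : Fin 2) (q : ℝ × E2) :
    fderiv ℝ (uc u i) q that
      + (u q 0 * fderiv ℝ (uc u i) q (what 0) + u q 1 * fderiv ℝ (uc u i) q (what 1))
      = -(1 / ρ q) * fderiv ℝ p q (what i) := by
  obtain ⟨t, x⟩ := q
  have hud : DifferentiableAt ℝ u (t, x) := (hu.differentiable (by simp)) (t, x)
  have hpd : DifferentiableAt ℝ p (t, x) := (hp.differentiable (by simp)) (t, x)
  have h : (deriv (fun τ => u (τ, x)) t + fderiv ℝ (fun y => u (t, y)) x (u (t, x))) i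
      = (-(1 / ρ (t, x)) • gradient (fun y => p (t, y)) x : E2) i := by
    rw [euler t x]
  have hderiv : deriv (fun τ => u (τ, x)) t = fderiv ℝ u (t, x) (1, 0) :=
    (hasDerivAt_slice hud).deriv
  have hsl : fderiv ℝ (fun y => u (t, y)) x (u (t, x)) = fderiv ℝ u (t, x) (0, u (t, x)) :=
    fderiv_slice_apply hud _
  -- expand LHS components
  have hL : (deriv (fun τ => u (τ, x)) t + fderiv ℝ (fun y => u (t, y)) x (u (t, x))) i
      = fderiv ℝ (uc u i) (t, x) that
        + (u (t, x) 0 * fderiv ℝ (uc u i) (t, x) (what 0)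
            + u (t, x) 1 * fderiv ℝ (uc u i) (t, x) (what 1)) := by
    have hadd : (deriv (fun τ => u (τ, x)) t + fderiv ℝ (fun y => u (t, y)) x (u (t, x))) i
        = deriv (fun τ => u (τ, x)) t i + fderiv ℝ (fun y => u (t, y)) x (u (t, x)) i := rfl
    rw [hadd, hderiv, hsl]
    have h0u : ((0 : ℝ), u (t, x)) = u (t,x) 0 • what 0 + u (t,x) 1 • what 1 := by
      simp only [what, Prod.smul_mk, Prod.mk_add_mk, smul_zero]
      refine Prod.ext (by simp) ?_
      simpa using decomp (u (t, x))
    rw [h0u, map_add, map_smul, map_smul]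
    rw [fderiv_proj hu _ _ i]
    simp only [PiLp.add_apply, PiLp.smul_apply, smul_eq_mul]
    rw [fderiv_proj hu _ _ i, fderiv_proj hu _ _ i]
    rfl
  -- expand RHS component
  have hR : (-(1 / ρ (t, x)) • gradient (fun y => p (t, y)) x : E2) i
      = -(1 / ρ (t, x)) * fderiv ℝ p (t, x) (what i) := by
    have : (-(1 / ρ (t, x)) • gradient (fun y => p (t, y)) x : E2) i
        = -(1 / ρ (t, x)) * (gradient (fun y => p (t, y)) x i) := rfl
    rw [this, gradient_component i, fderiv_slice_apply hpd]
    rfl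
  rw [← hL, h, hR]

/-- component form of the continuity equation. -/
lemma continuityC (hu : ContDiff ℝ (⊤ : ℕ∞) u) (hρ : ContDiff ℝ (⊤ : ℕ∞) ρ)
    (continuity : ∀ (t : ℝ) (x : E2),
      deriv (fun τ => ρ (τ, x)) t
        + ∑ i : Fin 2,
            fderiv ℝ (fun y => ρ (t, y) • u (t, y)) x (EuclideanSpace.single i 1) i = 0)
    (q : ℝ × E2) :
    fderiv ℝ ρ q that
      + ((fderiv ℝ ρ q (what 0) * u q 0 + ρ q * fderiv ℝ (uc u 0) q (what 0))
        + (fderiv ℝ ρ q (what 1) * u q 1 + ρ q * fderiv ℝ (uc u 1) q (what 1))) = 0 := by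
  obtain ⟨t, x⟩ := q
  have hud : DifferentiableAt ℝ u (t, x) := (hu.differentiable (by simp)) (t, x)
  have hρd : DifferentiableAt ℝ ρ (t, x) := (hρ.differentiable (by simp)) (t, x)
  have key := continuity t x
  have hderiv : deriv (fun τ => ρ (τ, x)) t = fderiv ℝ ρ (t, x) that :=
    (hasDerivAt_slice hρd).deriv
  have hudy : DifferentiableAt ℝ (fun y => u (t, y)) x :=
    hud.comp x ((differentiableAt_const t).prodMk differentiableAt_id)
  have hρdy : DifferentiableAt ℝ (fun y => ρ (t, y)) x :=
    hρd.comp x ((differentiableAt_const t).prodMk differentiableAt_id)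
  have hterm : ∀ i : Fin 2,
      fderiv ℝ (fun y => ρ (t, y) • u (t, y)) x (EuclideanSpace.single i 1) i
      = fderiv ℝ ρ (t,x) (what i) * u (t,x) i + ρ (t,x) * fderiv ℝ (uc u i) (t,x) (what i) := by
    intro i
    rw [fderiv_fun_smul hρdy hudy]
    have heei : (EuclideanSpace.single i 1 : E2) = ee i := rfl
    simp only [ContinuousLinearMap.add_apply, ContinuousLinearMap.smul_apply,
      ContinuousLinearMap.smulRight_apply, heei]
    have h1 : (ρ (t, x) • fderiv ℝ (fun y => u (t, y)) x (ee i) : E2) i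
        = ρ (t,x) * fderiv ℝ (uc u i) (t,x) (what i) := by
      have : fderiv ℝ (fun y => u (t, y)) x (ee i) = fderiv ℝ u (t,x) (0, ee i) :=
        fderiv_slice_apply hud _
      rw [PiLp.smul_apply, this, fderiv_proj hu _ _ i]
      rfl
    have h2 : (fderiv ℝ (fun y => ρ (t, y)) x (ee i) • u (t, x) : E2) i
        = fderiv ℝ ρ (t,x) (what i) * u (t,x) i := by
      rw [PiLp.smul_apply, fderiv_slice_apply hρd]
      rfl
    rw [PiLp.add_apply, h1, h2]
    ring
  rw [Fin.sum_univ_two, hterm 0, hterm 1, hderiv] at key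
  linarith [key]

/-- chain rule for the equation of state. -/
lemma fderiv_p_eq (hρ : ContDiff ℝ (⊤ : ℕ∞) ρ) {P : ℝ → ℝ} (hP : ContDiff ℝ 1 P)
    (eos : ∀ (t : ℝ) (x : E2), p (t, x) = P (ρ (t, x))) (q : ℝ × E2) :
    fderiv ℝ p q = deriv P (ρ q) • fderiv ℝ ρ q := by
  have hp_eq : p = fun q => P (ρ q) := by
    funext q'; obtain ⟨t, x⟩ := q'; exact eos t x
  have hPd : HasDerivAt P (deriv P (ρ q)) (ρ q) :=
    ((hP.differentiable one_ne_zero) (ρ q)).hasDerivAt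
  have hρd : HasFDerivAt ρ (fderiv ℝ ρ q) q := ((hρ.differentiable (by simp)) q).hasFDerivAt
  rw [hp_eq]
  exact (hPd.comp_hasFDerivAt q hρd).fderiv


noncomputable def vort (u : ℝ × E2 → E2) : ℝ × E2 → ℝ :=
  fun q => fderiv ℝ (uc u 1) q (what 0) - fderiv ℝ (uc u 0) q (what 1)
noncomputable def divu (u : ℝ × E2 → E2) : ℝ × E2 → ℝ :=
  fun q => fderiv ℝ (uc u 0) q (what 0) + fderiv ℝ (uc u 1) q (what 1)

noncomputable def Mat (φ : ℝ × E2 → E2) (y : E2) (τ : ℝ) : E2 →L[ℝ] E2 :=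
  fderiv ℝ (fun z => φ (τ, z)) y
noncomputable def dd (φ : ℝ × E2 → E2) (y : E2) : ℝ → ℝ := fun τ =>
  Mat φ y τ (ee 0) 0 * Mat φ y τ (ee 1) 1 - Mat φ y τ (ee 0) 1 * Mat φ y τ (ee 1) 0

/-- spatial directional derivative of the Euler equation. -/
lemma dEuler (hu : ContDiff ℝ (⊤ : ℕ∞) u) (hρ : ContDiff ℝ (⊤ : ℕ∞) ρ) (hp : ContDiff ℝ (⊤ : ℕ∞) p)
    (hρpos : ∀ q : ℝ × E2, 0 < ρ q)
    (euler : ∀ (t : ℝ) (x : E2),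
      deriv (fun τ => u (τ, x)) t + fderiv ℝ (fun y => u (t, y)) x (u (t, x))
        = -(1 / ρ (t, x)) • gradient (fun y => p (t, y)) x)
    (i : Fin 2) (q w : ℝ × E2) :
    fderiv ℝ (fun q' => fderiv ℝ (uc u i) q' that) q w
      + (fderiv ℝ (uc u 0) q w * fderiv ℝ (uc u i) q (what 0)
          + fderiv ℝ (uc u 1) q w * fderiv ℝ (uc u i) q (what 1))
      + (u q 0 * fderiv ℝ (fun q' => fderiv ℝ (uc u i) q' (what 0)) q w
          + u q 1 * fderiv ℝ (fun q' => fderiv ℝ (uc u i) q' (what 1)) q w)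
      = ((ρ q) ^ 2)⁻¹ * fderiv ℝ ρ q w * fderiv ℝ p q (what i)
        - (1 / ρ q) * fderiv ℝ (fun q' => fderiv ℝ p q' (what i)) q w := by
  have hui := contDiff_uc hu i
  have hu0 := contDiff_uc hu 0
  have hu1 := contDiff_uc hu 1
  -- the two sides of Euler, as functions of q'
  have hLfun : (fun q' => fderiv ℝ (uc u i) q' that
        + (uc u 0 q' * fderiv ℝ (uc u i) q' (what 0)
           + uc u 1 q' * fderiv ℝ (uc u i) q' (what 1)))
      = (fun q' => -(1 / ρ q') * fderiv ℝ p q' (what i)) := by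
    funext q'
    simpa [uc, neg_mul] using eulerC hu hρ hp euler i q'
  -- derivative of LHS
  have hA : HasFDerivAt (fun q' => fderiv ℝ (uc u i) q' that)
      (fderiv ℝ (fun q' => fderiv ℝ (uc u i) q' that) q) q :=
    ((diff_D hui that) q).hasFDerivAt
  have hm0 : HasFDerivAt (fun q' => uc u 0 q' * fderiv ℝ (uc u i) q' (what 0))
      (uc u 0 q • fderiv ℝ (fun q' => fderiv ℝ (uc u i) q' (what 0)) q
        + fderiv ℝ (uc u i) q (what 0) • fderiv ℝ (uc u 0) q) q :=
    ((hu0.differentiable (by simp)) q).hasFDerivAt.mul ((diff_D hui (what 0)) q).hasFDerivAt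
  have hm1 : HasFDerivAt (fun q' => uc u 1 q' * fderiv ℝ (uc u i) q' (what 1))
      (uc u 1 q • fderiv ℝ (fun q' => fderiv ℝ (uc u i) q' (what 1)) q
        + fderiv ℝ (uc u i) q (what 1) • fderiv ℝ (uc u 1) q) q :=
    ((hu1.differentiable (by simp)) q).hasFDerivAt.mul ((diff_D hui (what 1)) q).hasFDerivAt
  have hL := hA.fun_add (hm0.fun_add hm1)
  -- derivative of RHS
  have hρd : HasFDerivAt ρ (fderiv ℝ ρ q) q := ((hρ.differentiable (by simp)) q).hasFDerivAt
  have hne : ρ q ≠ 0 := ne_of_gt (hρpos q)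
  have hinv : HasFDerivAt (fun q' => (ρ q')⁻¹) (-((ρ q) ^ 2)⁻¹ • fderiv ℝ ρ q) q :=
    (hasDerivAt_inv hne).comp_hasFDerivAt q hρd
  have hg : HasFDerivAt (fun q' => -(1 / ρ q')) (((ρ q) ^ 2)⁻¹ • fderiv ℝ ρ q) q := by
    have h1 : (fun q' => -(1 / ρ q')) = fun q' => -((ρ q')⁻¹) := by
      funext q'; rw [one_div]
    rw [h1]
    have : HasFDerivAt (fun q' => -(ρ q')⁻¹) ((-(-((ρ q) ^ 2)⁻¹)) • fderiv ℝ ρ q) q :=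
      (hasDerivAt_inv hne).neg.comp_hasFDerivAt q hρd
    simpa using this
  have hR := hg.fun_mul ((diff_D hp (what i)) q).hasFDerivAt
  -- combine
  have heq : fderiv ℝ (fun q' => fderiv ℝ (uc u i) q' that
        + (uc u 0 q' * fderiv ℝ (uc u i) q' (what 0)
           + uc u 1 q' * fderiv ℝ (uc u i) q' (what 1))) q
      = fderiv ℝ (fun q' => -(1 / ρ q') * fderiv ℝ p q' (what i)) q := by rw [hLfun]
  rw [hL.fderiv, hR.fderiv] at heq
  have happ := congrArg (fun (L : ℝ × E2 →L[ℝ] ℝ) => L w) heq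
  simp only [ContinuousLinearMap.add_apply, ContinuousLinearMap.smul_apply,
    smul_eq_mul] at happ
  simp only [uc] at happ
  ring_nf
  ring_nf at happ
  linarith [happ]


lemma contDiff_vort (hu : ContDiff ℝ (⊤ : ℕ∞) u) : ContDiff ℝ (⊤ : ℕ∞) (vort u) :=
  (contDiff_D (contDiff_uc hu 1) (what 0)).sub (contDiff_D (contDiff_uc hu 0) (what 1))

/-- transport equation for the scalar vorticity. -/
lemma vort_transport (hu : ContDiff ℝ (⊤ : ℕ∞) u) (hρ : ContDiff ℝ (⊤ : ℕ∞) ρ) (hp : ContDiff ℝ (⊤ : ℕ∞) p)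
    (hρpos : ∀ q : ℝ × E2, 0 < ρ q)
    (euler : ∀ (t : ℝ) (x : E2),
      deriv (fun τ => u (τ, x)) t + fderiv ℝ (fun y => u (t, y)) x (u (t, x))
        = -(1 / ρ (t, x)) • gradient (fun y => p (t, y)) x)
    {P : ℝ → ℝ} (hP : ContDiff ℝ 1 P)
    (eos : ∀ (t : ℝ) (x : E2), p (t, x) = P (ρ (t, x))) (q : ℝ × E2) :
    fderiv ℝ (vort u) q that
      + (u q 0 * fderiv ℝ (vort u) q (what 0) + u q 1 * fderiv ℝ (vort u) q (what 1))
      + vort u q * divu u q = 0 := by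
  have hu0 := contDiff_uc hu 0
  have hu1 := contDiff_uc hu 1
  -- split the fderiv of the vorticity
  have hω : ∀ v, fderiv ℝ (vort u) q v
      = fderiv ℝ (fun q' => fderiv ℝ (uc u 1) q' (what 0)) q v
        - fderiv ℝ (fun q' => fderiv ℝ (uc u 0) q' (what 1)) q v := by
    intro v
    have h := fderiv_fun_sub (𝕜 := ℝ)
      (f := fun q' => fderiv ℝ (uc u 1) q' (what 0))
      (g := fun q' => fderiv ℝ (uc u 0) q' (what 1))
      ((diff_D hu1 (what 0)) q) ((diff_D hu0 (what 1)) q)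
    have : vort u = fun q' => fderiv ℝ (uc u 1) q' (what 0)
        - fderiv ℝ (uc u 0) q' (what 1) := rfl
    rw [this, h]
    rfl
  have E10 := dEuler hu hρ hp hρpos euler 1 q (what 0)
  have E01 := dEuler hu hρ hp hρpos euler 0 q (what 1)
  -- Schwarz swaps
  rw [schwarz hu1 q that (what 0), schwarz hu1 q (what 1) (what 0)] at E10
  rw [schwarz hu0 q that (what 1), schwarz hu0 q (what 0) (what 1)] at E01
  rw [schwarz hp q (what 1) (what 0)] at E10
  -- pressure gradient is parallel to density gradient
  have hP0 : fderiv ℝ p q (what 0) = deriv P (ρ q) * fderiv ℝ ρ q (what 0) := by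
    rw [fderiv_p_eq hρ hP eos q]; rfl
  have hP1 : fderiv ℝ p q (what 1) = deriv P (ρ q) * fderiv ℝ ρ q (what 1) := by
    rw [fderiv_p_eq hρ hP eos q]; rfl
  rw [hP1] at E10
  rw [hP0] at E01
  rw [hω that, hω (what 0), hω (what 1)]
  simp only [vort, divu]
  linear_combination E10 - E01



/-- time derivative of a matrix entry of a CLM-valued curve. -/
lemma hasDerivAt_entry {N : ℝ → (E2 →L[ℝ] E2)} {N' : E2 →L[ℝ] E2} {t : ℝ}
    (hN : HasDerivAt N N' t) (v : E2) (i : Fin 2) :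
    HasDerivAt (fun τ => N τ v i) (N' v i) t :=
  (((EuclideanSpace.proj (𝕜 := ℝ) i).comp
    (ContinuousLinearMap.apply ℝ E2 v)).hasFDerivAt.comp_hasDerivAt t hN)

/-- the spatial velocity gradient at `(t, x)`, entry `i j`, via full derivatives -/
lemma slice_grad_entry {u : ℝ × E2 → E2} (hu : ContDiff ℝ (⊤ : ℕ∞) u) (t : ℝ) (x : E2) (i j : Fin 2) :
    fderiv ℝ (fun y => u (t, y)) x (ee j) i = fderiv ℝ (uc u i) (t, x) (what j) := by
  have hud : DifferentiableAt ℝ u (t, x) := (hu.differentiable (by simp)) (t, x)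
  rw [show (fderiv ℝ (fun y => u (t, y)) x (ee j) : E2) i
      = (fderiv ℝ (fun y => u (t, y)) x (ee j) : Fin 2 → ℝ) i from rfl]
  rw [fderiv_slice_apply hud (ee j), fderiv_proj hu]
  rfl

/-- expand `G (M v)` componentwise, `G` the velocity gradient. -/
lemma grad_apply_decomp {u : ℝ × E2 → E2} (hu : ContDiff ℝ (⊤ : ℕ∞) u) (t : ℝ) (x : E2) (v : E2)
    (i : Fin 2) :
    fderiv ℝ (fun y => u (t, y)) x v i
      = fderiv ℝ (uc u i) (t, x) (what 0) * v 0 + fderiv ℝ (uc u i) (t, x) (what 1) * v 1 := by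
  conv_lhs => rw [decomp v]
  rw [map_add, map_smul, map_smul]
  rw [show ((v 0 • fderiv ℝ (fun y => u (t, y)) x (ee 0)
      + v 1 • fderiv ℝ (fun y => u (t, y)) x (ee 1) : E2)) i
    = v 0 * fderiv ℝ (fun y => u (t, y)) x (ee 0) i
      + v 1 * fderiv ℝ (fun y => u (t, y)) x (ee 1) i from rfl]
  rw [slice_grad_entry hu, slice_grad_entry hu]
  ring

lemma vortScalar2_eq {u : ℝ × E2 → E2} (hu : ContDiff ℝ (⊤ : ℕ∞) u) (t : ℝ) (x : E2) :
    vortScalar2 u t x = vort u (t, x) := by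
  rw [vortScalar2, vort]
  rw [show (EuclideanSpace.single 0 1 : E2) = ee 0 from rfl,
      show (EuclideanSpace.single 1 1 : E2) = ee 1 from rfl,
      slice_grad_entry hu, slice_grad_entry hu]


/-- Main pointwise conservation lemma along the flow. -/
lemma key (hu : ContDiff ℝ (⊤ : ℕ∞) u) (hρ : ContDiff ℝ (⊤ : ℕ∞) ρ) (hp : ContDiff ℝ (⊤ : ℕ∞) p)
    (hρpos : ∀ q : ℝ × E2, 0 < ρ q)
    (euler : ∀ (t : ℝ) (x : E2),
      deriv (fun τ => u (τ, x)) t + fderiv ℝ (fun y => u (t, y)) x (u (t, x))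
        = -(1 / ρ (t, x)) • gradient (fun y => p (t, y)) x)
    (continuity : ∀ (t : ℝ) (x : E2),
      deriv (fun τ => ρ (τ, x)) t
        + ∑ i : Fin 2,
            fderiv ℝ (fun y => ρ (t, y) • u (t, y)) x (EuclideanSpace.single i 1) i = 0)
    {P : ℝ → ℝ} (hP : ContDiff ℝ 1 P)
    (eos : ∀ (t : ℝ) (x : E2), p (t, x) = P (ρ (t, x)))
    {φ : ℝ × E2 → E2}
    (hφ0 : ∀ x, φ (0, x) = x)
    (hflow : ∀ (t : ℝ) (x : E2), HasDerivAt (fun τ => φ (τ, x)) (u (t, φ (t, x))) t)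
    (hflowD : ∀ (t : ℝ) (x : E2),
      HasDerivAt (fun τ => fderiv ℝ (fun y => φ (τ, y)) x)
        ((fderiv ℝ (fun y => u (t, y)) (φ (t, x))).comp
          (fderiv ℝ (fun y => φ (t, y)) x)) t)
    (y : E2) (t : ℝ) :
    ρ (t, φ (t, y)) * dd φ y t = ρ (0, y)
      ∧ vort u (t, φ (t, y)) / ρ (t, φ (t, y)) = vort u (0, y) / ρ (0, y) := by
  have hρdiff := hρ.differentiable (by simp)
  have hvdiff := (contDiff_vort hu).differentiable (by simp)
  -- derivatives of the matrix entries
  have hmij : ∀ (s : ℝ) (i j : Fin 2),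
      HasDerivAt (fun τ => Mat φ y τ (ee j) i)
        (fderiv ℝ (uc u i) (s, φ (s, y)) (what 0) * Mat φ y s (ee j) 0
          + fderiv ℝ (uc u i) (s, φ (s, y)) (what 1) * Mat φ y s (ee j) 1) s := by
    intro s i j
    have h := hasDerivAt_entry (hflowD s y) (ee j) i
    have h2 : ((fderiv ℝ (fun y' => u (s, y')) (φ (s, y))).comp
        (fderiv ℝ (fun y' => φ (s, y')) y)) (ee j) i
        = fderiv ℝ (uc u i) (s, φ (s, y)) (what 0) * Mat φ y s (ee j) 0
          + fderiv ℝ (uc u i) (s, φ (s, y)) (what 1) * Mat φ y s (ee j) 1 := by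
      rw [ContinuousLinearMap.comp_apply]
      exact grad_apply_decomp hu s (φ (s, y)) _ i
    rw [← h2]
    exact h
  -- derivative of the determinant: Liouville formula
  have hdet : ∀ s : ℝ,
      HasDerivAt (dd φ y)
        ((fderiv ℝ (uc u 0) (s, φ (s, y)) (what 0)
          + fderiv ℝ (uc u 1) (s, φ (s, y)) (what 1)) * dd φ y s) s := by
    intro s
    have h := (((hmij s 0 0).mul (hmij s 1 1)).sub ((hmij s 1 0).mul (hmij s 0 1)))
    have heq : (fderiv ℝ (uc u 0) (s, φ (s, y)) (what 0) * Mat φ y s (ee 0) 0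
          + fderiv ℝ (uc u 0) (s, φ (s, y)) (what 1) * Mat φ y s (ee 0) 1)
            * Mat φ y s (ee 1) 1
        + Mat φ y s (ee 0) 0 * (fderiv ℝ (uc u 1) (s, φ (s, y)) (what 0) * Mat φ y s (ee 1) 0
          + fderiv ℝ (uc u 1) (s, φ (s, y)) (what 1) * Mat φ y s (ee 1) 1)
        - ((fderiv ℝ (uc u 1) (s, φ (s, y)) (what 0) * Mat φ y s (ee 0) 0
          + fderiv ℝ (uc u 1) (s, φ (s, y)) (what 1) * Mat φ y s (ee 0) 1)
            * Mat φ y s (ee 1) 0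
          + Mat φ y s (ee 0) 1
            * (fderiv ℝ (uc u 0) (s, φ (s, y)) (what 0) * Mat φ y s (ee 1) 0
              + fderiv ℝ (uc u 0) (s, φ (s, y)) (what 1) * Mat φ y s (ee 1) 1))
        = (fderiv ℝ (uc u 0) (s, φ (s, y)) (what 0)
            + fderiv ℝ (uc u 1) (s, φ (s, y)) (what 1)) * dd φ y s := by
      simp only [dd]; ring
    rw [← heq]
    exact h
  -- derivative of the transported density
  have hRd : ∀ s : ℝ,
      HasDerivAt (fun τ => ρ (τ, φ (τ, y)))
        (-(ρ (s, φ (s, y)) * (fderiv ℝ (uc u 0) (s, φ (s, y)) (what 0)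
            + fderiv ℝ (uc u 1) (s, φ (s, y)) (what 1)))) s := by
    intro s
    have h := hasDerivAt_along (hρdiff (s, φ (s, y))) (hflow s y)
    have h2 : fderiv ℝ ρ (s, φ (s, y)) (1, u (s, φ (s, y)))
        = -(ρ (s, φ (s, y)) * (fderiv ℝ (uc u 0) (s, φ (s, y)) (what 0)
            + fderiv ℝ (uc u 1) (s, φ (s, y)) (what 1))) := by
      rw [fderiv_one_v]
      have hc := continuityC hu hρ continuity (s, φ (s, y))
      simp only [smul_eq_mul] at *
      linarith [hc]
    rw [← h2]
    exact h
  -- derivative of the transported vorticity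
  have hWd : ∀ s : ℝ,
      HasDerivAt (fun τ => vort u (τ, φ (τ, y)))
        (-(vort u (s, φ (s, y)) * (fderiv ℝ (uc u 0) (s, φ (s, y)) (what 0)
            + fderiv ℝ (uc u 1) (s, φ (s, y)) (what 1)))) s := by
    intro s
    have h := hasDerivAt_along (hvdiff (s, φ (s, y))) (hflow s y)
    have h2 : fderiv ℝ (vort u) (s, φ (s, y)) (1, u (s, φ (s, y)))
        = -(vort u (s, φ (s, y)) * (fderiv ℝ (uc u 0) (s, φ (s, y)) (what 0)
            + fderiv ℝ (uc u 1) (s, φ (s, y)) (what 1))) := by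
      rw [fderiv_one_v]
      have hv := vort_transport hu hρ hp hρpos euler hP eos (s, φ (s, y))
      simp only [divu, smul_eq_mul] at *
      linarith [hv]
    rw [← h2]
    exact h
  -- the mass `ρ ∘ φ · det Dφ` is constant
  have hmass : ∀ s : ℝ, HasDerivAt (fun τ => ρ (τ, φ (τ, y)) * dd φ y τ) 0 s := by
    intro s
    have h := (hRd s).mul (hdet s)
    have : -(ρ (s, φ (s, y)) * (fderiv ℝ (uc u 0) (s, φ (s, y)) (what 0)
            + fderiv ℝ (uc u 1) (s, φ (s, y)) (what 1))) * dd φ y s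
        + ρ (s, φ (s, y)) * ((fderiv ℝ (uc u 0) (s, φ (s, y)) (what 0)
            + fderiv ℝ (uc u 1) (s, φ (s, y)) (what 1)) * dd φ y s) = 0 := by ring
    rw [← this]
    exact h
  -- the ratio `vort/ρ ∘ φ` is constant
  have hratio : ∀ s : ℝ,
      HasDerivAt (fun τ => vort u (τ, φ (τ, y)) / ρ (τ, φ (τ, y))) 0 s := by
    intro s
    have hne : ρ (s, φ (s, y)) ≠ 0 := ne_of_gt (hρpos _)
    have h := (hWd s).div (hRd s) hne
    have : (-(vort u (s, φ (s, y)) * (fderiv ℝ (uc u 0) (s, φ (s, y)) (what 0)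
            + fderiv ℝ (uc u 1) (s, φ (s, y)) (what 1))) * ρ (s, φ (s, y))
        - vort u (s, φ (s, y)) * -(ρ (s, φ (s, y)) * (fderiv ℝ (uc u 0) (s, φ (s, y)) (what 0)
            + fderiv ℝ (uc u 1) (s, φ (s, y)) (what 1)))) / ρ (s, φ (s, y)) ^ 2 = 0 := by
      field_simp
      ring
    rw [← this]
    exact h
  -- constancy
  have hconst : ∀ (g : ℝ → ℝ), (∀ s, HasDerivAt g 0 s) → g t = g 0 := by
    intro g hg
    have hdiff : Differentiable ℝ g := fun s => (hg s).differentiableAt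
    have := is_const_of_deriv_eq_zero hdiff (fun s => (hg s).deriv) t 0
    exact this
  have hM0 : Mat φ y 0 = ContinuousLinearMap.id ℝ E2 := by
    have : (fun z => φ (0, z)) = id := funext hφ0
    rw [Mat, this, fderiv_id]
  have hdd0 : dd φ y 0 = 1 := by
    rw [dd, hM0]
    simp only [ContinuousLinearMap.id_apply]
    simp [ee, EuclideanSpace.single_apply]
  constructor
  · have h := hconst _ hmass
    simpa [hφ0 y, hdd0] using h
  · have h := hconst _ hratio
    simpa [hφ0 y] using h


end Enstrophy2D

/-- Two-dimensional enstrophy constants of motion: the generalized enstrophy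
`∫_{φ(t)(V₀)} f(ϖ/ρ) ρ dx` over a moving domain is constant in time for isentropic
compressible flow. -/
theorem enstrophy_constant_of_motion_2d
    (u : ℝ × EuclideanSpace ℝ (Fin 2) → EuclideanSpace ℝ (Fin 2))
    (ρ p : ℝ × EuclideanSpace ℝ (Fin 2) → ℝ)
    (hu : ContDiff ℝ (⊤ : ℕ∞) u) (hρ : ContDiff ℝ (⊤ : ℕ∞) ρ) (hp : ContDiff ℝ (⊤ : ℕ∞) p)
    (hρpos : ∀ (t : ℝ) (x : EuclideanSpace ℝ (Fin 2)), 0 < ρ (t, x))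
    (euler : ∀ (t : ℝ) (x : EuclideanSpace ℝ (Fin 2)),
      deriv (fun τ => u (τ, x)) t + fderiv ℝ (fun y => u (t, y)) x (u (t, x))
        = -(1 / ρ (t, x)) • gradient (fun y => p (t, y)) x)
    (continuity : ∀ (t : ℝ) (x : EuclideanSpace ℝ (Fin 2)),
      deriv (fun τ => ρ (τ, x)) t
        + ∑ i : Fin 2,
            fderiv ℝ (fun y => ρ (t, y) • u (t, y)) x (EuclideanSpace.single i 1) i = 0)
    (P : ℝ → ℝ) (hP : ContDiff ℝ 1 P)
    (eos : ∀ (t : ℝ) (x : EuclideanSpace ℝ (Fin 2)), p (t, x) = P (ρ (t, x)))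
    (φ : ℝ × EuclideanSpace ℝ (Fin 2) → EuclideanSpace ℝ (Fin 2))
    (hφ : ContDiff ℝ 1 φ)
    (hφ0 : ∀ x, φ (0, x) = x)
    (hflow : ∀ (t : ℝ) (x : EuclideanSpace ℝ (Fin 2)),
      HasDerivAt (fun τ => φ (τ, x)) (u (t, φ (t, x))) t)
    (hflowD : ∀ (t : ℝ) (x : EuclideanSpace ℝ (Fin 2)),
      HasDerivAt (fun τ => fderiv ℝ (fun y => φ (τ, y)) x)
        ((fderiv ℝ (fun y => u (t, y)) (φ (t, x))).comp
          (fderiv ℝ (fun y => φ (t, y)) x)) t)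
    (hinj : ∀ t : ℝ, Function.Injective (fun x => φ (t, x)))
    (f : ℝ → ℝ) (hf : Continuous f)
    (V₀ : Set (EuclideanSpace ℝ (Fin 2)))
    (hV₀b : Bornology.IsBounded V₀) (hV₀m : MeasurableSet V₀) :
    ∀ t : ℝ,
      (∫ x in (fun y => φ (t, y)) '' V₀, f (vortScalar2 u t x / ρ (t, x)) * ρ (t, x))
        = ∫ x in V₀, f (vortScalar2 u 0 x / ρ (0, x)) * ρ (0, x) := by
  intro t
  have hρpos' : ∀ q : ℝ × E2, 0 < ρ q := fun q => by
    have := hρpos q.1 q.2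
    simpa using this
  have hΦdiff : Differentiable ℝ (fun z => φ (t, z)) :=
    (hφ.differentiable one_ne_zero).comp ((differentiable_const t).prodMk differentiable_id)
  have hfd : ∀ x ∈ V₀, HasFDerivWithinAt (fun z => φ (t, z))
      (fderiv ℝ (fun z => φ (t, z)) x) V₀ x :=
    fun x _ => (hΦdiff x).hasFDerivAt.hasFDerivWithinAt
  rw [MeasureTheory.integral_image_eq_integral_abs_det_fderiv_smul MeasureTheory.volume hV₀m hfd
    ((hinj t).injOn) _]
  refine MeasureTheory.setIntegral_congr_fun hV₀m (fun y _ => ?_)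
  obtain ⟨h1, h2⟩ :=
    Enstrophy2D.key hu hρ hp hρpos' euler continuity hP eos hφ0 hflow hflowD y t
  have hdet_eq : (fderiv ℝ (fun z => φ (t, z)) y).det = Enstrophy2D.dd φ y t := by
    rw [show fderiv ℝ (fun z => φ (t, z)) y = Enstrophy2D.Mat φ y t from rfl,
      Enstrophy2D.det_fin_two_clm]
    simp [Enstrophy2D.dd]
  have hddpos : 0 < Enstrophy2D.dd φ y t := by
    have hρt := hρpos t (φ (t, y))
    have hρ0 := hρpos 0 y
    nlinarith [h1]
  rw [hdet_eq, abs_of_pos hddpos, smul_eq_mul, Enstrophy2D.vortScalar2_eq hu,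
    Enstrophy2D.vortScalar2_eq hu, h2]
  have : Enstrophy2D.dd φ y t
        * (f (Enstrophy2D.vort u (0, y) / ρ (0, y)) * ρ (t, φ (t, y)))
      = f (Enstrophy2D.vort u (0, y) / ρ (0, y)) * (ρ (t, φ (t, y)) * Enstrophy2D.dd φ y t) := by
    ring
  rw [this, h1]
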